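/- Let μ be a balanced measure on ℝ, N ∈ ℕ, p ∈ (1,∞), and let w be a weight with w^{1−p'} ∈ L¹_loc(μ). Suppose there exists a constant C such that every Haar shift T ∈ HS(s,t) with s+t ≤ N satisfies ‖Tf‖_{L^p(w dμ)} ≤ C ‖f‖_{L^p(w dμ)} for all f ∈ L^p(w dμ). Then there is a constant C' = C'(μ,p,N) such that for every pair of disjoint J,K ∈ 𝒟 with 2 < dist_𝒟(J,K) ≤ N+2: c_p^b(J,K) ⟨w⟩_J (⟨w^{1−p'}⟩_K)^{p−1} ≤ C' C^p. -/

import Mathlib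

open MeasureTheory Set
open scoped ENNReal NNReal

noncomputable section

/-- A dyadic interval `[2^(-k) j, 2^(-k) (j+1))`. -/
structure DyadicInterval where
  k : ℤ
  j : ℤ
deriving DecidableEq

namespace DyadicInterval

/-- The underlying set of a dyadic interval. -/
def toSet (I : DyadicInterval) : Set ℝ :=
  Set.Ico ((2 : ℝ) ^ (-I.k) * (I.j : ℝ)) ((2 : ℝ) ^ (-I.k) * ((I.j : ℝ) + 1))

/-- Left dyadic child. -/
def left (I : DyadicInterval) : DyadicInterval := ⟨I.k + 1, 2 * I.j⟩

/-- Right dyadic child. -/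
def right (I : DyadicInterval) : DyadicInterval := ⟨I.k + 1, 2 * I.j + 1⟩

/-- Dyadic parent. -/
def parent (I : DyadicInterval) : DyadicInterval := ⟨I.k - 1, Int.fdiv I.j 2⟩

/-- Dyadic sibling (the other child of the parent). -/
def sibling (I : DyadicInterval) : DyadicInterval :=
  if 2 ∣ I.j then ⟨I.k, I.j + 1⟩ else ⟨I.k, I.j - 1⟩

/-- `s`-th dyadic ancestor. -/
def ancestor (I : DyadicInterval) : ℕ → DyadicInterval
  | 0 => I
  | n + 1 => (I.ancestor n).parent

end DyadicInterval

open DyadicInterval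

/-- Dyadic distance: `min {s+t : I^(s) = J^(t)}`, `∞` if there is no common ancestor. -/
def ddist (I J : DyadicInterval) : ℕ∞ :=
  ⨅ (p : ℕ × ℕ) (_ : I.ancestor p.1 = J.ancestor p.2), ((p.1 + p.2 : ℕ) : ℕ∞)

/-- `μ(I)` as a real number. -/
def muR (μ : Measure ℝ) (I : DyadicInterval) : ℝ := (μ I.toSet).toReal

/-- `m(I) = μ(I₋) μ(I₊) / μ(I)`. -/
def mBal (μ : Measure ℝ) (I : DyadicInterval) : ℝ :=
  muR μ I.left * muR μ I.right / muR μ I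

/-- Average `⟨f⟩_I = μ(I)⁻¹ ∫_I f dμ`. -/
def avg (μ : Measure ℝ) (I : DyadicInterval) (f : ℝ → ℝ) : ℝ :=
  (muR μ I)⁻¹ * ∫ x in I.toSet, f x ∂μ

/-- The Haar function `h_I`. -/
def haarFn (μ : Measure ℝ) (I : DyadicInterval) : ℝ → ℝ := fun x =>
  Real.sqrt (mBal μ I) *
    (I.left.toSet.indicator (fun _ => (muR μ I.left)⁻¹) x -
      I.right.toSet.indicator (fun _ => (muR μ I.right)⁻¹) x)

/-- Pairing `⟨f,g⟩ = ∫ f g dμ`. -/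
def pairing (μ : Measure ℝ) (f g : ℝ → ℝ) : ℝ := ∫ x, f x * g x ∂μ

/-- Standing assumptions: atomless, locally finite Borel measure with `μ(I) > 0`
on all dyadic intervals. -/
def GoodMeasure (μ : Measure ℝ) : Prop :=
  IsLocallyFiniteMeasure μ ∧ NoAtoms μ ∧ ∀ I : DyadicInterval, 0 < μ I.toSet

/-- Balanced measure: `m(I) ∼ m(Î)` uniformly. -/
def BalancedMeasure (μ : Measure ℝ) : Prop :=
  GoodMeasure μ ∧ ∃ c : ℝ, 1 ≤ c ∧ ∀ I : DyadicInterval,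
    c⁻¹ * mBal μ I.parent ≤ mBal μ I ∧ mBal μ I ≤ c * mBal μ I.parent

/-- `η`-sparse family of dyadic intervals. -/
def IsSparse (μ : Measure ℝ) (η : ℝ) (S : Set DyadicInterval) : Prop :=
  ∃ E : DyadicInterval → Set ℝ,
    (∀ I ∈ S, MeasurableSet (E I)) ∧ (∀ I ∈ S, E I ⊆ I.toSet) ∧
    (∀ I ∈ S, ENNReal.ofReal (η * muR μ I) ≤ μ (E I)) ∧
    S.PairwiseDisjoint E

/-- Classical sparse form `A_S(f₁,f₂)`. -/
def formA (μ : Measure ℝ) (S : Set DyadicInterval) (f₁ f₂ : ℝ → ℝ) : ℝ :=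
  ∑' I : S, avg μ I.1 f₁ * avg μ I.1 f₂ * muR μ I.1

/-- Modified sparse form `C_S^N(f₁,f₂)`. -/
def formC (μ : Measure ℝ) (N : ℕ) (S : Set DyadicInterval) (f₁ f₂ : ℝ → ℝ) : ℝ :=
  ∑' q : {q : DyadicInterval × DyadicInterval // q.1 ∈ S ∧ q.2 ∈ S ∧
      Disjoint q.1.toSet q.2.toSet ∧ (2 : ℕ∞) < ddist q.1 q.2 ∧
      ddist q.1 q.2 ≤ (N : ℕ∞) + 2},
    avg μ q.1.1 f₁ * avg μ q.1.2 f₂ * Real.sqrt (mBal μ q.1.1 * mBal μ q.1.2)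

/-- Haar shift of complexity `(s,t)` with coefficients `α`, defined pointwise. -/
def haarShift (μ : Measure ℝ) (s t : ℕ)
    (α : DyadicInterval → DyadicInterval → DyadicInterval → ℝ) (f : ℝ → ℝ) (x : ℝ) : ℝ :=
  ∑' I : DyadicInterval, ∑' J : {J : DyadicInterval // J.ancestor s = I},
    ∑' K : {K : DyadicInterval // K.ancestor t = I},
      α I J.1 K.1 * pairing μ f (haarFn μ J.1) * haarFn μ K.1 x

/-- The dyadic Hilbert transform. -/
def dyadicHilbert (μ : Measure ℝ) (f : ℝ → ℝ) (x : ℝ) : ℝ :=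
  ∑' I : DyadicInterval,
    pairing μ f (haarFn μ I) * (haarFn μ I.left x - haarFn μ I.right x)

/-- Conjugate exponent `p' = p/(p-1)`. -/
def conjExp (p : ℝ) : ℝ := p / (p - 1)

/-- The correction factor `c_p^b(I,J)`. -/
def cpb (μ : Measure ℝ) (p : ℝ) (I J : DyadicInterval) : ℝ :=
  if I = J then 1
  else mBal μ I ^ (p / 2) * mBal μ J ^ (p / 2) / (muR μ J * muR μ I ^ (p - 1))

/-- The modified maximal operator `M^N`. -/
def maxOp (μ : Measure ℝ) (N : ℕ) (f : ℝ → ℝ) (x : ℝ) : ℝ≥0∞ :=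
  ⨆ (q : DyadicInterval × DyadicInterval)
    (_ : ddist q.1 q.2 ≤ (N : ℕ∞) + 2 ∧ x ∈ q.2.toSet),
    ENNReal.ofReal (cpb μ 1 q.1 q.2 * avg μ q.1 fun y => |f y|)

/-- A weight: a.e. positive, locally integrable. -/
def IsWeight (μ : Measure ℝ) (w : ℝ → ℝ) : Prop :=
  Measurable w ∧ (∀ᵐ x ∂μ, 0 < w x) ∧ LocallyIntegrable w μ

/-- The measure `w dμ`. -/
def wMeasure (μ : Measure ℝ) (w : ℝ → ℝ) : Measure ℝ :=
  μ.withDensity fun x => ENNReal.ofReal (w x)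

/-- The quantity `c_p^b(I,J) ⟨w⟩_I ⟨w^{1-p'}⟩_J^{p-1}` (with the `ess sup` convention
for `p = 1`), valued in `ℝ≥0∞`. -/
def ApTerm (μ : Measure ℝ) (p : ℝ) (w : ℝ → ℝ) (I J : DyadicInterval) : ℝ≥0∞ :=
  if p = 1 then
    ENNReal.ofReal (cpb μ 1 I J * avg μ I w) *
      essSup (fun x => ENNReal.ofReal (w x)⁻¹) (μ.restrict J.toSet)
  else
    ENNReal.ofReal (cpb μ p I J * avg μ I w *
      (avg μ J fun x => w x ^ (1 - conjExp p)) ^ (p - 1))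

/-- The classical dyadic `A_p(μ)` characteristic. -/
def ApChar (μ : Measure ℝ) (p : ℝ) (w : ℝ → ℝ) : ℝ≥0∞ :=
  ⨆ I : DyadicInterval,
    ENNReal.ofReal (avg μ I w * (avg μ I fun x => w x ^ (1 - conjExp p)) ^ (p - 1))

/-- The dyadic `A₂(μ)` characteristic. -/
def A2Char (μ : Measure ℝ) (w : ℝ → ℝ) : ℝ≥0∞ :=
  ⨆ I : DyadicInterval, ENNReal.ofReal (avg μ I w * avg μ I fun x => (w x)⁻¹)

/-- The complexity-`N` characteristic `[w]_{A_p^N(μ)}`. -/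
def ApNChar (μ : Measure ℝ) (p : ℝ) (N : ℕ) (w : ℝ → ℝ) : ℝ≥0∞ :=
  ⨆ (q : DyadicInterval × DyadicInterval) (_ : ddist q.1 q.2 ≤ (N : ℕ∞) + 2),
    ApTerm μ p w q.1 q.2

/-- The pairs of intervals relevant for the balanced `A_p` class. -/
def bPair (I J : DyadicInterval) : Prop :=
  J = I ∨ J = I.sibling.left ∨ J = I.sibling.right ∨
    I = J.sibling.left ∨ I = J.sibling.right

/-- The balanced characteristic `[w]_{A_p^b(μ)}`. -/
def ApbChar (μ : Measure ℝ) (p : ℝ) (w : ℝ → ℝ) : ℝ≥0∞ :=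
  ⨆ (q : DyadicInterval × DyadicInterval) (_ : bPair q.1 q.2), ApTerm μ p w q.1 q.2

/-- `L^p` norm (as an element of `ℝ≥0∞`) of an `ℝ≥0∞`-valued function. -/
def lpNormENN (ν : Measure ℝ) (p : ℝ) (g : ℝ → ℝ≥0∞) : ℝ≥0∞ :=
  (∫⁻ x, g x ^ p ∂ν) ^ (1 / p)

open MeasureTheory Set DyadicInterval
open scoped ENNReal NNReal

namespace DyadicInterval

lemma toSet_def (I : DyadicInterval) : I.toSet =
    Set.Ico ((2 : ℝ) ^ (-I.k) * (I.j : ℝ)) ((2 : ℝ) ^ (-I.k) * ((I.j : ℝ) + 1)) := rfl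

lemma twopow (k : ℤ) : (2:ℝ) ^ (-(k+1)) * 2 = (2:ℝ)^(-k) := by
  rw [← zpow_add_one₀ (by norm_num : (2:ℝ) ≠ 0)]; ring_nf

lemma toSet_nonempty (I : DyadicInterval) : I.toSet.Nonempty := by
  rw [toSet_def, Set.nonempty_Ico]
  have h2 : (0:ℝ) < (2:ℝ) ^ (-I.k) := zpow_pos (by norm_num) _
  nlinarith

lemma measurableSet_toSet (I : DyadicInterval) : MeasurableSet I.toSet :=
  measurableSet_Ico

lemma left_subset (I : DyadicInterval) : I.left.toSet ⊆ I.toSet := by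
  rw [toSet_def, toSet_def]
  have h := twopow I.k
  have hpos : (0:ℝ) < (2:ℝ) ^ (-(I.k+1)) := zpow_pos (by norm_num) _
  apply Set.Ico_subset_Ico
  · show (2:ℝ) ^ (-I.k) * (I.j:ℝ) ≤ (2:ℝ) ^ (-(I.k+1)) * ((2*I.j : ℤ):ℝ)
    push_cast
    rw [← h]; nlinarith
  · show (2:ℝ) ^ (-(I.k+1)) * (((2*I.j : ℤ):ℝ) + 1) ≤ (2:ℝ) ^ (-I.k) * ((I.j:ℝ)+1)
    push_cast
    rw [← h]; nlinarith

lemma right_subset (I : DyadicInterval) : I.right.toSet ⊆ I.toSet := by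
  rw [toSet_def, toSet_def]
  have h := twopow I.k
  have hpos : (0:ℝ) < (2:ℝ) ^ (-(I.k+1)) := zpow_pos (by norm_num) _
  apply Set.Ico_subset_Ico
  · show (2:ℝ) ^ (-I.k) * (I.j:ℝ) ≤ (2:ℝ) ^ (-(I.k+1)) * ((2*I.j+1 : ℤ):ℝ)
    push_cast
    rw [← h]; nlinarith
  · show (2:ℝ) ^ (-(I.k+1)) * (((2*I.j+1 : ℤ):ℝ) + 1) ≤ (2:ℝ) ^ (-I.k) * ((I.j:ℝ)+1)
    push_cast
    rw [← h]; nlinarith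

lemma disjoint_children (I : DyadicInterval) : Disjoint I.left.toSet I.right.toSet := by
  rw [toSet_def, toSet_def]
  have : (2:ℝ) ^ (-(I.left.k)) * ((I.left.j:ℝ) + 1)
      = (2:ℝ) ^ (-(I.right.k)) * (I.right.j:ℝ) := by
    show (2:ℝ) ^ (-(I.k+1)) * (((2*I.j : ℤ):ℝ) + 1) = (2:ℝ) ^ (-(I.k+1)) * ((2*I.j+1 : ℤ):ℝ)
    push_cast; ring
  rw [this]
  exact Set.Ico_disjoint_Ico_same

lemma parent_child (I : DyadicInterval) : I.parent.left = I ∨ I.parent.right = I := by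
  have hd : 2 * (Int.fdiv I.j 2) = I.j ∨ 2 * (Int.fdiv I.j 2) + 1 = I.j := by
    rw [Int.fdiv_eq_ediv_of_nonneg _ (by norm_num)]
    omega
  rcases hd with h | h
  · left
    show (⟨I.k - 1 + 1, 2 * Int.fdiv I.j 2⟩ : DyadicInterval) = I
    cases I; simp_all
  · right
    show (⟨I.k - 1 + 1, 2 * Int.fdiv I.j 2 + 1⟩ : DyadicInterval) = I
    cases I; simp_all

lemma subset_parent (I : DyadicInterval) : I.toSet ⊆ I.parent.toSet := by
  rcases parent_child I with h | h
  · conv_lhs => rw [← h]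
    exact left_subset _
  · conv_lhs => rw [← h]
    exact right_subset _

lemma subset_ancestor (I : DyadicInterval) (n : ℕ) : I.toSet ⊆ (I.ancestor n).toSet := by
  induction n with
  | zero => exact subset_rfl
  | succ n ih => exact ih.trans (subset_parent _)

lemma parent_ancestor (I : DyadicInterval) (n : ℕ) :
    (I.parent).ancestor n = (I.ancestor n).parent := by
  induction n with
  | zero => rfl
  | succ n ih => show ((I.parent).ancestor n).parent = _; rw [ih]; rfl

end DyadicInterval

section Meas

variable {μ : Measure ℝ}

lemma measure_toSet_ne_top (hg : GoodMeasure μ) (I : DyadicInterval) : μ I.toSet ≠ ⊤ := by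
  haveI := hg.1
  have hsub : I.toSet ⊆ Set.Icc ((2 : ℝ) ^ (-I.k) * (I.j : ℝ)) ((2 : ℝ) ^ (-I.k) * ((I.j : ℝ) + 1)) :=
    Set.Ico_subset_Icc_self
  exact ne_top_of_le_ne_top (IsCompact.measure_lt_top isCompact_Icc).ne (measure_mono hsub)

lemma muR_pos (hg : GoodMeasure μ) (I : DyadicInterval) : 0 < muR μ I :=
  ENNReal.toReal_pos (hg.2.2 I).ne' (measure_toSet_ne_top hg I)

lemma mBal_pos (hg : GoodMeasure μ) (I : DyadicInterval) : 0 < mBal μ I :=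
  div_pos (mul_pos (muR_pos hg I.left) (muR_pos hg I.right)) (muR_pos hg I)

lemma integrableOn_toSet {f : ℝ → ℝ} (hf : LocallyIntegrable f μ) (I : DyadicInterval) :
    IntegrableOn f I.toSet μ :=
  (hf.integrableOn_isCompact isCompact_Icc).mono_set Set.Ico_subset_Icc_self

lemma haar_left {I : DyadicInterval} {x : ℝ} (hx : x ∈ I.left.toSet) :
    haarFn μ I x = Real.sqrt (mBal μ I) * (muR μ I.left)⁻¹ := by
  have hnx : x ∉ I.right.toSet := fun h => (Set.disjoint_left.mp (disjoint_children I) hx) h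
  unfold haarFn
  rw [Set.indicator_of_mem hx, Set.indicator_of_notMem hnx]
  ring

lemma haar_right {I : DyadicInterval} {x : ℝ} (hx : x ∈ I.right.toSet) :
    haarFn μ I x = -(Real.sqrt (mBal μ I) * (muR μ I.right)⁻¹) := by
  have hnx : x ∉ I.left.toSet := fun h => (Set.disjoint_right.mp (disjoint_children I) hx) h
  unfold haarFn
  rw [Set.indicator_of_mem hx, Set.indicator_of_notMem hnx]
  ring

lemma haar_on_child (μ : Measure ℝ) (J : DyadicInterval) :
    ∃ ε : ℝ, (ε = 1 ∨ ε = -1) ∧ ∀ x ∈ J.toSet,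
      haarFn μ J.parent x = ε * (Real.sqrt (mBal μ J.parent) * (muR μ J)⁻¹) := by
  rcases parent_child J with h | h
  · refine ⟨1, Or.inl rfl, fun x hx => ?_⟩
    have hx' : x ∈ J.parent.left.toSet := by rwa [h]
    rw [haar_left hx', h]
    ring
  · refine ⟨-1, Or.inr rfl, fun x hx => ?_⟩
    have hx' : x ∈ J.parent.right.toSet := by rwa [h]
    rw [haar_right hx', h]
    ring

lemma pairing_indicator (hg : GoodMeasure μ) {σ : ℝ → ℝ} (hσ : LocallyIntegrable σ μ)
    (K : DyadicInterval) :
    ∃ ε : ℝ, (ε = 1 ∨ ε = -1) ∧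
      pairing μ (K.toSet.indicator σ) (haarFn μ K.parent) =
        ε * (Real.sqrt (mBal μ K.parent) * (muR μ K)⁻¹) * ∫ x in K.toSet, σ x ∂μ := by
  obtain ⟨ε, hε, hval⟩ := haar_on_child μ K
  refine ⟨ε, hε, ?_⟩
  unfold pairing
  have h1 : ∀ x, K.toSet.indicator σ x * haarFn μ K.parent x
      = K.toSet.indicator (fun y => σ y * haarFn μ K.parent y) x := fun x =>
    (Set.indicator_mul_left _ _ _).symm
  simp_rw [h1]
  rw [integral_indicator (measurableSet_toSet K)]
  rw [setIntegral_congr_fun (measurableSet_toSet K)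
    (fun x hx => by simp only []; rw [hval x hx]; ring : Set.EqOn (fun y => σ y * haarFn μ K.parent y)
      (fun y => (ε * (Real.sqrt (mBal μ K.parent) * (muR μ K)⁻¹)) * σ y) K.toSet)]
  rw [integral_const_mul]

end Meas

section Main

variable {μ : Measure ℝ}

lemma haarShift_single (μ : Measure ℝ) (s t : ℕ) (L Kp Jp : DyadicInterval)
    (hKp : Kp.ancestor s = L) (hJp : Jp.ancestor t = L) (f : ℝ → ℝ) :
    haarShift μ s t (fun I A B => if I = L ∧ A = Kp ∧ B = Jp then 1 else 0) f
      = fun x => pairing μ f (haarFn μ Kp) * haarFn μ Jp x := by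
  funext x
  unfold haarShift
  have houter : ∀ I : DyadicInterval, I ≠ L →
      (∑' (J : {A : DyadicInterval // A.ancestor s = I}),
        ∑' (K : {B : DyadicInterval // B.ancestor t = I}),
          (if I = L ∧ J.1 = Kp ∧ K.1 = Jp then (1:ℝ) else 0) * pairing μ f (haarFn μ J.1)
            * haarFn μ K.1 x) = 0 := by
    intro I hI
    have h0 : ∀ (b : {A : DyadicInterval // A.ancestor s = I}),
        (∑' (K : {B : DyadicInterval // B.ancestor t = I}),
          (if I = L ∧ b.1 = Kp ∧ K.1 = Jp then (1:ℝ) else 0) * pairing μ f (haarFn μ b.1)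
            * haarFn μ K.1 x) = 0 := by
      intro b
      have h1 : ∀ (c : {B : DyadicInterval // B.ancestor t = I}),
          (if I = L ∧ b.1 = Kp ∧ c.1 = Jp then (1:ℝ) else 0) * pairing μ f (haarFn μ b.1)
            * haarFn μ c.1 x = 0 := by
        intro c
        rw [if_neg (fun hc => hI hc.1)]
        ring
      rw [tsum_congr h1, tsum_zero]
    rw [tsum_congr h0, tsum_zero]
  rw [tsum_eq_single L houter]
  have hmid : ∀ (b : {A : DyadicInterval // A.ancestor s = L}), b ≠ ⟨Kp, hKp⟩ →
      (∑' (K : {B : DyadicInterval // B.ancestor t = L}),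
        (if L = L ∧ b.1 = Kp ∧ K.1 = Jp then (1:ℝ) else 0) * pairing μ f (haarFn μ b.1)
          * haarFn μ K.1 x) = 0 := by
    intro b hb
    have hbv : b.1 ≠ Kp := fun h => hb (Subtype.ext h)
    have h1 : ∀ (c : {B : DyadicInterval // B.ancestor t = L}),
        (if L = L ∧ b.1 = Kp ∧ c.1 = Jp then (1:ℝ) else 0) * pairing μ f (haarFn μ b.1)
          * haarFn μ c.1 x = 0 := by
      intro c
      rw [if_neg (fun hc => hbv hc.2.1)]
      ring
    rw [tsum_congr h1, tsum_zero]
  rw [tsum_eq_single (⟨Kp, hKp⟩ : {A : DyadicInterval // A.ancestor s = L}) hmid]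
  have hinn : ∀ (c : {B : DyadicInterval // B.ancestor t = L}), c ≠ ⟨Jp, hJp⟩ →
      (if L = L ∧ (⟨Kp, hKp⟩ : {A : DyadicInterval // A.ancestor s = L}).1 = Kp ∧ c.1 = Jp
        then (1:ℝ) else 0) * pairing μ f (haarFn μ Kp) * haarFn μ c.1 x = 0 := by
    intro c hc
    have hcv : c.1 ≠ Jp := fun h => hc (Subtype.ext h)
    rw [if_neg (fun hc' => hcv hc'.2.2)]
    ring
  rw [tsum_eq_single (⟨Jp, hJp⟩ : {B : DyadicInterval // B.ancestor t = L}) hinn]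
  simp

lemma elp_test {w : ℝ → ℝ} (hw : IsWeight μ w) {p : ℝ} (hp : 1 < p)
    (hσloc : LocallyIntegrable (fun x => w x ^ (1 - conjExp p)) μ) (K : DyadicInterval) :
    eLpNorm (K.toSet.indicator (fun x => w x ^ (1 - conjExp p))) (ENNReal.ofReal p)
        (wMeasure μ w)
      = (ENNReal.ofReal (∫ x in K.toSet, w x ^ (1 - conjExp p) ∂μ)) ^ (1/p) := by
  have hp0 : (0:ℝ) < p := lt_trans one_pos hp
  have hq0 : ENNReal.ofReal p ≠ 0 := (ENNReal.ofReal_pos.mpr hp0).ne'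
  have hσm : Measurable (fun x => w x ^ (1 - conjExp p)) := hw.1.pow measurable_const
  have hfm : Measurable (K.toSet.indicator (fun x => w x ^ (1 - conjExp p))) :=
    hσm.indicator (measurableSet_toSet K)
  rw [eLpNorm_eq_lintegral_rpow_enorm_toReal hq0 ENNReal.ofReal_ne_top,
    ENNReal.toReal_ofReal hp0.le]
  congr 1
  unfold wMeasure
  rw [lintegral_withDensity_eq_lintegral_mul μ hw.1.ennreal_ofReal
    ((hfm.enorm).pow_const _)]
  have hae : (fun x => ((fun y => ENNReal.ofReal (w y)) *
        fun y => ‖K.toSet.indicator (fun z => w z ^ (1 - conjExp p)) y‖ₑ ^ p) x)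
      =ᵐ[μ] fun x => K.toSet.indicator (fun y => ENNReal.ofReal (w y ^ (1 - conjExp p))) x := by
    filter_upwards [hw.2.1] with x hx
    simp only [Pi.mul_apply]
    by_cases hxK : x ∈ K.toSet
    · rw [Set.indicator_of_mem hxK, Set.indicator_of_mem hxK,
        Real.enorm_eq_ofReal (Real.rpow_nonneg hx.le _),
        ENNReal.ofReal_rpow_of_nonneg (Real.rpow_nonneg hx.le _) hp0.le,
        ← ENNReal.ofReal_mul hx.le]
      congr 1
      have hexp : (1:ℝ) + (1 - conjExp p) * p = 1 - conjExp p := by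
        unfold conjExp
        have : p - 1 ≠ 0 := sub_ne_zero.mpr (ne_of_gt hp)
        field_simp
        ring
      calc w x * (w x ^ (1 - conjExp p)) ^ p
          = w x ^ (1:ℝ) * w x ^ ((1 - conjExp p) * p) := by
            rw [Real.rpow_one, ← Real.rpow_mul hx.le]
        _ = w x ^ ((1:ℝ) + (1 - conjExp p) * p) := (Real.rpow_add hx _ _).symm
        _ = w x ^ (1 - conjExp p) := by rw [hexp]
    · rw [Set.indicator_of_notMem hxK, Set.indicator_of_notMem hxK]
      simp [ENNReal.zero_rpow_of_pos hp0]
  rw [lintegral_congr_ae hae, lintegral_indicator (measurableSet_toSet K)]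
  rw [← ofReal_integral_eq_lintegral_ofReal (integrableOn_toSet hσloc K)
    (ae_restrict_of_ae (hw.2.1.mono fun x hx => Real.rpow_nonneg hx.le _))]

lemma elp_lower (hg : GoodMeasure μ) {w : ℝ → ℝ} (hw : IsWeight μ w) {p : ℝ} (hp : 1 < p)
    (c : ℝ) (J : DyadicInterval) :
    ENNReal.ofReal ((|c| * (Real.sqrt (mBal μ J.parent) * (muR μ J)⁻¹)) ^ p
        * ∫ x in J.toSet, w x ∂μ)
      ≤ (eLpNorm (fun x => c * haarFn μ J.parent x) (ENNReal.ofReal p) (wMeasure μ w)) ^ p := by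
  have hp0 : (0:ℝ) < p := lt_trans one_pos hp
  have hq0 : ENNReal.ofReal p ≠ 0 := (ENNReal.ofReal_pos.mpr hp0).ne'
  have hmuJ : (0:ℝ) ≤ muR μ J := ENNReal.toReal_nonneg
  set a : ℝ := |c| * (Real.sqrt (mBal μ J.parent) * (muR μ J)⁻¹) with ha_def
  have ha : 0 ≤ a := by positivity
  rw [eLpNorm_eq_lintegral_rpow_enorm_toReal hq0 ENNReal.ofReal_ne_top,
    ENNReal.toReal_ofReal hp0.le, ← ENNReal.rpow_mul, one_div_mul_cancel hp0.ne',
    ENNReal.rpow_one]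
  obtain ⟨ε, hε, hval⟩ := haar_on_child μ J
  have hpoint : ∀ x ∈ J.toSet,
      ‖c * haarFn μ J.parent x‖ₑ ^ p = ENNReal.ofReal (a ^ p) := by
    intro x hx
    rw [hval x hx, Real.enorm_eq_ofReal_abs,
      ENNReal.ofReal_rpow_of_nonneg (abs_nonneg _) hp0.le]
    congr 2
    have hb : 0 ≤ Real.sqrt (mBal μ J.parent) * (muR μ J)⁻¹ := by
      positivity
    rcases hε with h | h <;> subst h <;>
      simp [abs_mul, abs_of_nonneg hb, ha_def] <;> ring
  have hν : (wMeasure μ w) J.toSet = ENNReal.ofReal (∫ x in J.toSet, w x ∂μ) := by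
    unfold wMeasure
    rw [withDensity_apply _ (measurableSet_toSet J)]
    exact (ofReal_integral_eq_lintegral_ofReal (integrableOn_toSet hw.2.2 J)
      (ae_restrict_of_ae (hw.2.1.mono fun x hx => hx.le))).symm
  calc ENNReal.ofReal (a ^ p * ∫ x in J.toSet, w x ∂μ)
      = ENNReal.ofReal (a ^ p) * (wMeasure μ w) J.toSet := by
        rw [ENNReal.ofReal_mul (by positivity), hν]
    _ = ∫⁻ _ in J.toSet, ENNReal.ofReal (a ^ p) ∂(wMeasure μ w) := by
        rw [setLIntegral_const]
    _ = ∫⁻ x in J.toSet, ‖c * haarFn μ J.parent x‖ₑ ^ p ∂(wMeasure μ w) := by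
        refine (setLIntegral_congr_fun (measurableSet_toSet J) ?_).symm
        exact hpoint
    _ ≤ ∫⁻ x, ‖c * haarFn μ J.parent x‖ₑ ^ p ∂(wMeasure μ w) :=
        setLIntegral_le_lintegral _ _

lemma ddist_witness {J K : DyadicInterval} {N : ℕ} (hdisj : Disjoint J.toSet K.toSet)
    (h2 : (2:ℕ∞) < ddist J K) (hN : ddist J K ≤ (N:ℕ∞) + 2) :
    ∃ s t : ℕ, 1 ≤ s ∧ 1 ≤ t ∧ s + t ≤ N + 2 ∧ 2 < s + t ∧ J.ancestor s = K.ancestor t := by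
  have hlt : ddist J K < (N:ℕ∞) + 3 := lt_of_le_of_lt hN (by
    have : ((N+2:ℕ) : ℕ∞) < ((N+3:ℕ) : ℕ∞) := by exact_mod_cast Nat.lt_succ_self (N+2)
    push_cast at this
    convert this using 2 <;> norm_num)
  unfold ddist at hlt h2
  rw [iInf_lt_iff] at hlt
  obtain ⟨q, hq⟩ := hlt
  rw [iInf_lt_iff] at hq
  obtain ⟨hcond, hqlt⟩ := hq
  have hle : (2:ℕ∞) < ((q.1 + q.2 : ℕ) : ℕ∞) := by
    refine lt_of_lt_of_le h2 ?_
    exact (iInf_le _ q).trans (iInf_le _ hcond)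
  have h2' : 2 < q.1 + q.2 := by exact_mod_cast hle
  have hN' : q.1 + q.2 ≤ N + 2 := by
    have : ((q.1 + q.2 : ℕ) : ℕ∞) < ((N + 3 : ℕ) : ℕ∞) := by
      refine lt_of_lt_of_le hqlt (le_of_eq ?_)
      push_cast
      norm_num
    have := (Nat.cast_lt (α := ℕ∞)).mp this
    omega
  have hs1 : 1 ≤ q.1 := by
    by_contra h
    have hq10 : q.1 = 0 := by omega
    rw [hq10] at hcond
    have hsub : K.toSet ⊆ J.toSet := by
      have := subset_ancestor K q.2
      rwa [← hcond] at this
    obtain ⟨x, hx⟩ := toSet_nonempty K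
    exact (Set.disjoint_right.mp hdisj hx) (hsub hx)
  have ht1 : 1 ≤ q.2 := by
    by_contra h
    have hq20 : q.2 = 0 := by omega
    rw [hq20] at hcond
    have hsub : J.toSet ⊆ K.toSet := by
      have := subset_ancestor J q.1
      rwa [hcond] at this
    obtain ⟨x, hx⟩ := toSet_nonempty J
    exact (Set.disjoint_left.mp hdisj hx) (hsub hx)
  exact ⟨q.1, q.2, hs1, ht1, hN', h2', hcond⟩

lemma final_alg {p c C bJ bK bJp bKp mJ mK W S : ℝ}
    (hp : 1 < p) (hc : 1 ≤ c) (hbJp : 0 < bJp) (hbKp : 0 < bKp)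
    (hbJ : 0 < bJ) (hbK : 0 < bK)
    (hmJ : 0 < mJ) (hmK : 0 < mK) (hW : 0 ≤ W) (hS : 0 < S) (hC : 0 ≤ C)
    (h1 : bJ ≤ c * bJp) (h2 : bK ≤ c * bKp)
    (key : (Real.sqrt bKp * mK⁻¹ * S * (Real.sqrt bJp * mJ⁻¹)) ^ p * W ≤ C ^ p * S) :
    bJ ^ (p/2) * bK ^ (p/2) / (mK * mJ ^ (p-1)) * (mJ⁻¹ * W) * (mK⁻¹ * S) ^ (p-1)
      ≤ c ^ p * C ^ p := by
  have hp0 : (0:ℝ) < p := lt_trans one_pos hp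
  have hc0 : (0:ℝ) < c := lt_of_lt_of_le one_pos hc
  have hsq : ∀ {x : ℝ}, 0 < x → Real.sqrt x ^ p = x ^ (p/2) := by
    intro x hx
    rw [Real.sqrt_eq_rpow, ← Real.rpow_mul hx.le]
    congr 1
    ring
  -- rewrite key
  have hkey : (bKp ^ (p/2) * (mK ^ p)⁻¹ * S ^ p * (bJp ^ (p/2) * (mJ ^ p)⁻¹)) * W
      ≤ C ^ p * S := by
    have e1 : (Real.sqrt bKp * mK⁻¹ * S * (Real.sqrt bJp * mJ⁻¹)) ^ p
        = bKp ^ (p/2) * (mK ^ p)⁻¹ * S ^ p * (bJp ^ (p/2) * (mJ ^ p)⁻¹) := by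
      rw [Real.mul_rpow (by positivity) (by positivity),
        Real.mul_rpow (by positivity) hS.le,
        Real.mul_rpow (Real.sqrt_nonneg _) (by positivity),
        Real.mul_rpow (Real.sqrt_nonneg _) (by positivity),
        Real.inv_rpow hmK.le, Real.inv_rpow hmJ.le, hsq hbKp, hsq hbJp]
    rw [← e1]
    exact key
  have hmain : bJp ^ (p/2) * bKp ^ (p/2) / (mK * mJ ^ (p-1)) * (mJ⁻¹ * W)
      * (mK⁻¹ * S) ^ (p-1) ≤ C ^ p := by
    have hinv : (mK⁻¹ * S) ^ (p-1) = (mK ^ (p-1))⁻¹ * S ^ (p-1) := by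
      rw [Real.mul_rpow (by positivity) hS.le, Real.inv_rpow hmK.le]
    have hmJp : mJ ^ (p-1) * mJ = mJ ^ p := by
      nth_rewrite 2 [← Real.rpow_one mJ]
      rw [← Real.rpow_add hmJ]
      norm_num
    have hmKp : mK * mK ^ (p-1) = mK ^ p := by
      nth_rewrite 1 [← Real.rpow_one mK]
      rw [← Real.rpow_add hmK]
      norm_num
    have hSp : S ^ (p-1) * S = S ^ p := by
      nth_rewrite 2 [← Real.rpow_one S]
      rw [← Real.rpow_add hS]
      norm_num
    have hEq : bJp ^ (p/2) * bKp ^ (p/2) / (mK * mJ ^ (p-1)) * (mJ⁻¹ * W)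
        * (mK⁻¹ * S) ^ (p-1) * S
        = (bKp ^ (p/2) * (mK ^ p)⁻¹ * S ^ p * (bJp ^ (p/2) * (mJ ^ p)⁻¹)) * W := by
      rw [hinv, ← hmJp, ← hmKp, ← hSp]
      field_simp
    refine (mul_le_mul_iff_left₀ hS).mp ?_
    rw [hEq]
    exact hkey
  have hb1 : bJ ^ (p/2) ≤ c ^ (p/2) * bJp ^ (p/2) := by
    rw [← Real.mul_rpow hc0.le hbJp.le]
    exact Real.rpow_le_rpow hbJ.le h1 (by positivity)
  have hb2 : bK ^ (p/2) ≤ c ^ (p/2) * bKp ^ (p/2) := by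
    rw [← Real.mul_rpow hc0.le hbKp.le]
    exact Real.rpow_le_rpow hbK.le h2 (by positivity)
  have hcc : c ^ (p/2) * c ^ (p/2) = c ^ p := by
    rw [← Real.rpow_add hc0]
    norm_num
  calc bJ ^ (p/2) * bK ^ (p/2) / (mK * mJ ^ (p-1)) * (mJ⁻¹ * W) * (mK⁻¹ * S) ^ (p-1)
      = (bJ ^ (p/2) * bK ^ (p/2)) * ((mK * mJ ^ (p-1))⁻¹ * (mJ⁻¹ * W)
          * (mK⁻¹ * S) ^ (p-1)) := by ring
    _ ≤ ((c ^ (p/2) * bJp ^ (p/2)) * (c ^ (p/2) * bKp ^ (p/2)))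
          * ((mK * mJ ^ (p-1))⁻¹ * (mJ⁻¹ * W) * (mK⁻¹ * S) ^ (p-1)) := by
        gcongr
        all_goals positivity
    _ = (c ^ (p/2) * c ^ (p/2)) * (bJp ^ (p/2) * bKp ^ (p/2) / (mK * mJ ^ (p-1))
          * (mJ⁻¹ * W) * (mK⁻¹ * S) ^ (p-1)) := by ring
    _ = c ^ p * (bJp ^ (p/2) * bKp ^ (p/2) / (mK * mJ ^ (p-1))
          * (mJ⁻¹ * W) * (mK⁻¹ * S) ^ (p-1)) := by rw [hcc]
    _ ≤ c ^ p * C ^ p := by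
        exact mul_le_mul_of_nonneg_left hmain (by positivity)

end Main

theorem statement17 (μ : Measure ℝ) (hμ : BalancedMeasure μ) (N : ℕ) (p : ℝ)
    (hp : 1 < p) :
    ∃ C' > (0 : ℝ), ∀ w : ℝ → ℝ, IsWeight μ w →
      LocallyIntegrable (fun x => w x ^ (1 - conjExp p)) μ →
      ∀ C : ℝ, 0 ≤ C →
      (∀ s t : ℕ, s + t ≤ N →
        ∀ α : DyadicInterval → DyadicInterval → DyadicInterval → ℝ,
          (∀ I J K, |α I J K| ≤ 1) →
          ∀ f : ℝ → ℝ, MemLp f (ENNReal.ofReal p) (wMeasure μ w) →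
            eLpNorm (haarShift μ s t α f) (ENNReal.ofReal p) (wMeasure μ w) ≤
              ENNReal.ofReal C * eLpNorm f (ENNReal.ofReal p) (wMeasure μ w)) →
      ∀ J K : DyadicInterval, Disjoint J.toSet K.toSet →
        (2 : ℕ∞) < ddist J K → ddist J K ≤ (N : ℕ∞) + 2 →
        cpb μ p J K * avg μ J w *
            (avg μ K fun x => w x ^ (1 - conjExp p)) ^ (p - 1) ≤ C' * C ^ p := by
  obtain ⟨hg, c, hc1, hcball⟩ := hμ
  have hc0 : (0:ℝ) < c := lt_of_lt_of_le one_pos hc1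
  have hp0 : (0:ℝ) < p := lt_trans one_pos hp
  refine ⟨c ^ p, Real.rpow_pos_of_pos hc0 p, ?_⟩
  intro w hw hσloc C hC hbound J K hdisj h2 hN
  obtain ⟨s, t, hs1, ht1, hstN, hst2, hanc⟩ := ddist_witness hdisj h2 hN
  have hJpanc : J.parent.ancestor (s-1) = J.ancestor s := by
    rw [parent_ancestor]
    have hs : s - 1 + 1 = s := by omega
    conv_rhs => rw [← hs]
    rfl
  have hKpanc : K.parent.ancestor (t-1) = J.ancestor s := by
    rw [parent_ancestor]
    have ht : t - 1 + 1 = t := by omega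
    rw [hanc, ← ht]
    rfl
  have hS0 : (0:ℝ) ≤ ∫ x in K.toSet, w x ^ (1 - conjExp p) ∂μ :=
    integral_nonneg_of_ae (ae_restrict_of_ae (hw.2.1.mono fun x hx => Real.rpow_nonneg hx.le _))
  have hW0 : (0:ℝ) ≤ ∫ x in J.toSet, w x ∂μ :=
    integral_nonneg_of_ae (ae_restrict_of_ae (hw.2.1.mono fun x hx => hx.le))
  have hJK : J ≠ K := by
    intro h
    obtain ⟨x, hx⟩ := toSet_nonempty K
    exact (Set.disjoint_right.mp hdisj hx) (h ▸ hx)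
  unfold cpb avg
  rw [if_neg hJK]
  rcases eq_or_lt_of_le hS0 with hSeq | hSpos
  · rw [← hSeq, mul_zero, Real.zero_rpow (sub_ne_zero.mpr (ne_of_gt hp)), mul_zero]
    have : (0:ℝ) ≤ c ^ p * C ^ p :=
      mul_nonneg (Real.rpow_nonneg hc0.le _) (Real.rpow_nonneg hC _)
    linarith
  · -- main case
    have hσm : Measurable (fun x => w x ^ (1 - conjExp p)) := hw.1.pow measurable_const
    have hfnorm := elp_test hw hp hσloc K
    have hmem : MemLp (K.toSet.indicator (fun x => w x ^ (1 - conjExp p)))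
        (ENNReal.ofReal p) (wMeasure μ w) := by
      refine ⟨(hσm.indicator (measurableSet_toSet K)).aestronglyMeasurable, ?_⟩
      rw [hfnorm]
      exact ENNReal.rpow_lt_top_of_nonneg (by positivity) ENNReal.ofReal_ne_top
    have hα : ∀ I A B : DyadicInterval,
        |(fun I' A' B' => if I' = J.ancestor s ∧ A' = K.parent ∧ B' = J.parent
          then (1:ℝ) else 0) I A B| ≤ 1 := by
      intro I A B
      simp only []
      split_ifs <;> norm_num
    have hTbound := hbound (t-1) (s-1) (by omega)
      (fun I' A' B' => if I' = J.ancestor s ∧ A' = K.parent ∧ B' = J.parent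
        then (1:ℝ) else 0) hα
      (K.toSet.indicator (fun x => w x ^ (1 - conjExp p))) hmem
    rw [haarShift_single μ (t-1) (s-1) (J.ancestor s) K.parent J.parent hKpanc hJpanc,
      hfnorm] at hTbound
    obtain ⟨ε, hε, hpair⟩ := pairing_indicator hg hσloc K
    have hmuK : (0:ℝ) ≤ muR μ K := ENNReal.toReal_nonneg
    have habs : |pairing μ (K.toSet.indicator fun x => w x ^ (1 - conjExp p))
        (haarFn μ K.parent)|
        = Real.sqrt (mBal μ K.parent) * (muR μ K)⁻¹
            * ∫ x in K.toSet, w x ^ (1 - conjExp p) ∂μ := by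
      rw [hpair]
      have hb : (0:ℝ) ≤ Real.sqrt (mBal μ K.parent) * (muR μ K)⁻¹ := by positivity
      rcases hε with h | h <;> subst h
      · rw [one_mul, abs_of_nonneg (mul_nonneg hb hS0)]
      · have : (-1:ℝ) * (Real.sqrt (mBal μ K.parent) * (muR μ K)⁻¹)
            * ∫ x in K.toSet, w x ^ (1 - conjExp p) ∂μ
            = -((Real.sqrt (mBal μ K.parent) * (muR μ K)⁻¹)
                * ∫ x in K.toSet, w x ^ (1 - conjExp p) ∂μ) := by ring
        rw [this, abs_neg, abs_of_nonneg (mul_nonneg hb hS0)]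
    have hlow := elp_lower hg hw hp
      (pairing μ (K.toSet.indicator fun x => w x ^ (1 - conjExp p)) (haarFn μ K.parent)) J
    have hchain : ENNReal.ofReal
        ((|pairing μ (K.toSet.indicator fun x => w x ^ (1 - conjExp p)) (haarFn μ K.parent)|
          * (Real.sqrt (mBal μ J.parent) * (muR μ J)⁻¹)) ^ p * ∫ x in J.toSet, w x ∂μ)
        ≤ ENNReal.ofReal (C ^ p * ∫ x in K.toSet, w x ^ (1 - conjExp p) ∂μ) := by
      refine le_trans (le_trans hlow (ENNReal.rpow_le_rpow hTbound hp0.le)) (le_of_eq ?_)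
      rw [ENNReal.mul_rpow_of_nonneg _ _ hp0.le, ← ENNReal.rpow_mul,
        one_div_mul_cancel hp0.ne', ENNReal.rpow_one,
        ENNReal.ofReal_rpow_of_nonneg hC hp0.le,
        ← ENNReal.ofReal_mul (Real.rpow_nonneg hC _)]
    have hkey := (ENNReal.ofReal_le_ofReal_iff
      (mul_nonneg (Real.rpow_nonneg hC _) hS0)).mp hchain
    rw [habs] at hkey
    exact final_alg hp hc1 (mBal_pos hg J.parent) (mBal_pos hg K.parent)
      (mBal_pos hg J) (mBal_pos hg K) (muR_pos hg J) (muR_pos hg K)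
      hW0 hSpos hC (hcball J).2 (hcball K).2 hkey

end
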